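/- In the divided power algebra Γ(M), the composite of the comultiplication component Δ_{[i,j]} : Γ^{i+j}(M) → Γ^i(M) ⊗ Γ^j(M) followed by multiplication m_{[i,j]} : Γ^i(M) ⊗ Γ^j(M) → Γ^{i+j}(M) is multiplication by the binomial coefficient C(i+j, i). -/

import Mathlib

open TensorProduct

universe u

/-- The relations defining the free divided power algebra on `M`: the generator
`X (m, n)` stands for `γ_n(m)`. -/
inductive DPRel (R : Type u) [CommRing R] (M : Type u) [AddCommGroup M] [Module R M] :
    MvPolynomial (M × ℕ) R → Prop
  | zero (m : M) : DPRel R M (MvPolynomial.X (m, 0) - 1)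
  | smul (r : R) (m : M) (n : ℕ) :
      DPRel R M (MvPolynomial.X (r • m, n) - MvPolynomial.C (r ^ n) * MvPolynomial.X (m, n))
  | add (m m' : M) (n : ℕ) :
      DPRel R M (MvPolynomial.X (m + m', n) -
        ∑ ij ∈ Finset.HasAntidiagonal.antidiagonal n, MvPolynomial.X (m, ij.1) * MvPolynomial.X (m', ij.2))
  | mul (m : M) (i j : ℕ) :
      DPRel R M (MvPolynomial.X (m, i) * MvPolynomial.X (m, j) -
        ((i + j).choose i : MvPolynomial (M × ℕ) R) * MvPolynomial.X (m, i + j))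

/-- The free divided power algebra `Γ(M)` on the `R`-module `M`. -/
def DPA (R : Type u) [CommRing R] (M : Type u) [AddCommGroup M] [Module R M] : Type u :=
  MvPolynomial (M × ℕ) R ⧸ Ideal.span {p | DPRel R M p}

variable (R : Type u) [CommRing R] (M : Type u) [AddCommGroup M] [Module R M]

noncomputable instance : CommRing (DPA R M) :=
  inferInstanceAs (CommRing (MvPolynomial (M × ℕ) R ⧸ Ideal.span {p | DPRel R M p}))
noncomputable instance : Algebra R (DPA R M) :=
  inferInstanceAs (Algebra R (MvPolynomial (M × ℕ) R ⧸ Ideal.span {p | DPRel R M p}))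

/-- The divided power `γ_n(m) ∈ Γ(M)`. -/
noncomputable def dpGamma (n : ℕ) (m : M) : DPA R M :=
  Ideal.Quotient.mk (Ideal.span {p | DPRel R M p}) (MvPolynomial.X (m, n))

/-- The degree `n` piece `Γⁿ(M)` of `Γ(M)`: the span of products `∏ γ_{n_i}(m_i)`
with `∑ n_i = n`. -/
noncomputable def GammaPow (n : ℕ) : Submodule R (DPA R M) :=
  Submodule.span R {x | ∃ (k : ℕ) (ms : Fin k → M) (ns : Fin k → ℕ),
    (∑ i, ns i) = n ∧ x = ∏ i, dpGamma R M (ns i) (ms i)}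

lemma dpGamma_mem (n : ℕ) (m : M) : dpGamma R M n m ∈ GammaPow R M n :=
  Submodule.subset_span ⟨1, fun _ => m, fun _ => n, by simp, by simp⟩

/-! The proof is a direct computation on the spanning products `x = ∏ₜ γ_{nₜ}(mₜ)` of
`Γ^{i+j}(M)`. Since `Δ` is multiplicative, `Δ x = ∑_f (∏ₜ γ_{fₜ}(mₜ)) ⊗ (∏ₜ γ_{nₜ-fₜ}(mₜ))`
over all `0 ≤ f ≤ n`. The projections keep exactly the terms with `∑ f = i`, and multiplying
back gives `∏ₜ C(nₜ, fₜ) · x` for each of them by `γ_a γ_b = C(a+b, a) γ_{a+b}`. Summing, the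
coefficient is `∑_{∑ f = i} ∏ₜ C(nₜ, fₜ) = C(∑ n, i)`, the Vandermonde identity read off
from `(1 + X)^{∑ n} = ∏ₜ (1 + X)^{nₜ}`. -/

open Polynomial in
theorem Nat.sum_piFinset_prod_choose {ι : Type*} [Fintype ι] [DecidableEq ι] (n : ι → ℕ)
    (i : ℕ) :
    ∑ f ∈ Fintype.piFinset (fun t => Finset.range (n t + 1)),
      (if ∑ t, f t = i then ∏ t, (n t).choose (f t) else 0) = (∑ t, n t).choose i := by
  have one_add_X_pow (a : ℕ) : (1 + X : ℕ[X]) ^ a =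
      ∑ b ∈ Finset.range (a + 1), C (a.choose b) * X ^ b := by
    rw [add_comm, add_pow]
    refine Finset.sum_congr rfl fun b _ => ?_
    rw [one_pow, mul_one, mul_comm, ← C_eq_natCast, Nat.cast_id]
  calc ∑ f ∈ Fintype.piFinset (fun t => Finset.range (n t + 1)),
        (if ∑ t, f t = i then ∏ t, (n t).choose (f t) else 0)
      = (∑ f ∈ Fintype.piFinset (fun t => Finset.range (n t + 1)),
          C (∏ t, (n t).choose (f t)) * X ^ (∑ t, f t)).coeff i := by
        rw [finsetSum_coeff]
        refine Finset.sum_congr rfl fun f _ => ?_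
        rw [coeff_C_mul_X_pow]
        exact if_congr eq_comm rfl rfl
    _ = (∏ t, (1 + X : ℕ[X]) ^ n t).coeff i := by
        simp_rw [one_add_X_pow, Finset.prod_univ_sum, Finset.prod_mul_distrib, map_prod,
          Finset.prod_pow_eq_pow_sum]
    _ = (∑ t, n t).choose i := by
        rw [Finset.prod_pow_eq_pow_sum, coeff_one_add_X_pow, Nat.cast_id]

theorem Algebra.TensorProduct.prod_tmul {R A B ι : Type*} [CommSemiring R] [CommSemiring A]
    [Algebra R A] [CommSemiring B] [Algebra R B] (s : Finset ι) (a : ι → A) (b : ι → B) :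
    ∏ t ∈ s, a t ⊗ₜ[R] b t = (∏ t ∈ s, a t) ⊗ₜ[R] (∏ t ∈ s, b t) := by
  classical
  induction s using Finset.cons_induction with
  | empty => simp [Algebra.TensorProduct.one_def]
  | cons t s hts ih => simp only [Finset.prod_cons, ih, Algebra.TensorProduct.tmul_mul_tmul]

section

variable {R : Type u} [CommRing R] {M : Type u} [AddCommGroup M] [Module R M]

theorem dpGamma_mul_dpGamma (a b : ℕ) (m : M) :
    dpGamma R M a m * dpGamma R M b m = (a + b).choose a * dpGamma R M (a + b) m := by
  have hrel := Ideal.Quotient.eq_zero_iff_mem.mpr (Ideal.subset_span (DPRel.mul (R := R) m a b))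
  rwa [map_sub, sub_eq_zero, map_mul, map_mul, map_natCast] at hrel

theorem prod_dpGamma_mul_prod_dpGamma_sub {ι : Type*} (s : Finset ι) (m : ι → M)
    (n f : ι → ℕ) (hf : ∀ t, f t ≤ n t) :
    (∏ t ∈ s, dpGamma R M (f t) (m t)) * ∏ t ∈ s, dpGamma R M (n t - f t) (m t) =
      (∏ t ∈ s, (n t).choose (f t) : ℕ) * ∏ t ∈ s, dpGamma R M (n t) (m t) := by
  rw [← Finset.prod_mul_distrib, Nat.cast_prod, ← Finset.prod_mul_distrib]
  refine Finset.prod_congr rfl fun t _ => ?_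
  rw [dpGamma_mul_dpGamma, Nat.add_sub_cancel' (hf t)]

theorem prod_dpGamma_mem_gammaPow {k : ℕ} (m : Fin k → M) (n : Fin k → ℕ) :
    ∏ t, dpGamma R M (n t) (m t) ∈ GammaPow R M (∑ t, n t) :=
  Submodule.subset_span ⟨k, m, n, rfl, rfl⟩

theorem comul_prod_dpGamma (Δ : DPA R M →ₐ[R] (DPA R M ⊗[R] DPA R M))
    (hΔ : ∀ (n : ℕ) (m : M),
      Δ (dpGamma R M n m) =
        ∑ i ∈ Finset.range (n + 1), dpGamma R M i m ⊗ₜ[R] dpGamma R M (n - i) m)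
    {ι : Type*} [Fintype ι] [DecidableEq ι] (m : ι → M) (n : ι → ℕ) :
    Δ (∏ t, dpGamma R M (n t) (m t)) =
      ∑ f ∈ Fintype.piFinset (fun t => Finset.range (n t + 1)),
        (∏ t, dpGamma R M (f t) (m t)) ⊗ₜ[R] ∏ t, dpGamma R M (n t - f t) (m t) := by
  simp_rw [map_prod, hΔ, Finset.prod_univ_sum, Algebra.TensorProduct.prod_tmul]

theorem mul'_map_proj_tmul (proj : ℕ → (DPA R M →ₗ[R] DPA R M))
    (hproj₁ : ∀ k, ∀ x ∈ GammaPow R M k, proj k x = x)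
    (hproj₂ : ∀ k l, k ≠ l → ∀ x ∈ GammaPow R M l, proj k x = 0)
    {i j a b : ℕ} (hab : a + b = i + j) {x y : DPA R M}
    (hx : x ∈ GammaPow R M a) (hy : y ∈ GammaPow R M b) :
    LinearMap.mul' R (DPA R M) (TensorProduct.map (proj i) (proj j) (x ⊗ₜ y)) =
      if a = i then x * y else 0 := by
  rw [TensorProduct.map_tmul, LinearMap.mul'_apply]
  split_ifs with hai
  · subst hai
    rw [hproj₁ a x hx, hproj₁ j y (by rwa [← Nat.add_left_cancel hab])]
  · rw [hproj₂ i a (Ne.symm hai) x hx, zero_mul]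

theorem mul'_map_proj_comul_prod_dpGamma (Δ : DPA R M →ₐ[R] (DPA R M ⊗[R] DPA R M))
    (hΔ : ∀ (n : ℕ) (m : M),
      Δ (dpGamma R M n m) =
        ∑ i ∈ Finset.range (n + 1), dpGamma R M i m ⊗ₜ[R] dpGamma R M (n - i) m)
    (proj : ℕ → (DPA R M →ₗ[R] DPA R M))
    (hproj₁ : ∀ k, ∀ x ∈ GammaPow R M k, proj k x = x)
    (hproj₂ : ∀ k l, k ≠ l → ∀ x ∈ GammaPow R M l, proj k x = 0)
    {i j k : ℕ} (m : Fin k → M) (n : Fin k → ℕ) (hn : ∑ t, n t = i + j) :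
    LinearMap.mul' R (DPA R M) (TensorProduct.map (proj i) (proj j)
      (Δ (∏ t, dpGamma R M (n t) (m t)))) =
        (i + j).choose i * ∏ t, dpGamma R M (n t) (m t) := by
  have summand (f) (hf : f ∈ Fintype.piFinset fun t => Finset.range (n t + 1)) :
      LinearMap.mul' R (DPA R M) (TensorProduct.map (proj i) (proj j)
        ((∏ t, dpGamma R M (f t) (m t)) ⊗ₜ ∏ t, dpGamma R M (n t - f t) (m t))) =
      ((if ∑ t, f t = i then ∏ t, (n t).choose (f t) else 0 : ℕ) : DPA R M) *
        ∏ t, dpGamma R M (n t) (m t) := by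
    have hfn t : f t ≤ n t :=
      Nat.lt_succ_iff.mp (Finset.mem_range.mp (Fintype.mem_piFinset.mp hf t))
    have hdeg : ∑ t, f t + ∑ t, (n t - f t) = i + j := by
      rw [← Finset.sum_add_distrib, ← hn]
      exact Finset.sum_congr rfl fun t _ => Nat.add_sub_cancel' (hfn t)
    rw [mul'_map_proj_tmul proj hproj₁ hproj₂ hdeg (prod_dpGamma_mem_gammaPow m f)
      (prod_dpGamma_mem_gammaPow m fun t => n t - f t)]
    split_ifs
    · exact prod_dpGamma_mul_prod_dpGamma_sub _ m n f hfn
    · rw [Nat.cast_zero, zero_mul]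
  rw [comul_prod_dpGamma Δ hΔ, map_sum, map_sum, Finset.sum_congr rfl summand, ← Finset.sum_mul,
    ← Nat.cast_sum, Nat.sum_piFinset_prod_choose, hn]

end

/-- On `Γ^{i+j}(M)`, the composite of the component `Δ_{[i,j]} : Γ^{i+j}(M) →
Γ^i(M) ⊗ Γ^j(M)` of the comultiplication with the multiplication
`m_{[i,j]} : Γ^i(M) ⊗ Γ^j(M) → Γ^{i+j}(M)` is multiplication by the binomial
coefficient `C(i+j, i)`. Here `Δ` is the comultiplication (characterized on the
`γ_n`) and `proj k` is the projection onto the degree `k` part of the grading. -/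
theorem dpa_mul_comp_comul (Δ : DPA R M →ₐ[R] (DPA R M ⊗[R] DPA R M))
    (hΔ : ∀ (n : ℕ) (m : M),
      Δ (dpGamma R M n m) =
        ∑ i ∈ Finset.range (n + 1), dpGamma R M i m ⊗ₜ[R] dpGamma R M (n - i) m)
    (proj : ℕ → (DPA R M →ₗ[R] DPA R M))
    (hproj₁ : ∀ k, ∀ x ∈ GammaPow R M k, proj k x = x)
    (hproj₂ : ∀ k l, k ≠ l → ∀ x ∈ GammaPow R M l, proj k x = 0)
    (i j : ℕ) :
    ∀ x ∈ GammaPow R M (i + j),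
      LinearMap.mul' R (DPA R M) (TensorProduct.map (proj i) (proj j) (Δ x)) =
        ((i + j).choose i) • x := by
  refine LinearMap.eqOn_span (f := LinearMap.mul' R (DPA R M) ∘ₗ
    TensorProduct.map (proj i) (proj j) ∘ₗ Δ.toLinearMap) (g := (i + j).choose i • .id) ?_
  rintro _ ⟨k, m, n, hn, rfl⟩
  exact (mul'_map_proj_comul_prod_dpGamma Δ hΔ proj hproj₁ hproj₂ m n hn).trans
    (nsmul_eq_mul _ _).symm
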